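/- If φ avoids Ω₁, then the first cohomology of F_φ with coefficients in the adjoint module has dimension p−1; that is, the quotient of the space of derivations of F_φ by the subspace of inner derivations (derivations of the form y ↦ [x,y] for x ∈ F_φ) has dimension p−1. -/

import Mathlib

open scoped BigOperators

noncomputable section

/-- The underlying space ℂ^{2p} of the Lie algebra `F_φ`. -/
abbrev V (p : ℕ) : Type := Fin (2*p) → ℂ

/-- The space of bilinear maps ℂ^{2p} × ℂ^{2p} → ℂ^{2p}. -/
abbrev Bil (p : ℕ) : Type := V p →ₗ[ℂ] V p →ₗ[ℂ] V p

/-- The basis vector `X j` (1-indexed, j = 1, …, 2p). -/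
def X (p j : ℕ) : V p := fun i => if (i : ℕ) + 1 = j then 1 else 0

/-- The coordinate functional dual to `X j` (1-indexed). -/
def coordL (p j : ℕ) : V p →ₗ[ℂ] ℂ :=
  if h : j - 1 < 2*p then LinearMap.proj (⟨j - 1, h⟩ : Fin (2*p)) else 0

/-- The elementary alternating bilinear map `(x,y) ↦ (x_a y_b − x_b y_a) • v`
(indices 1-based). -/
def elem (p a b : ℕ) (v : V p) : Bil p :=
  (coordL p a).smulRight ((coordL p b).smulRight v)
    - (coordL p b).smulRight ((coordL p a).smulRight v)

/-- The Lie bracket of the frobeniusian model algebra `F_φ`: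
`[X_1,X_2] = −X_1`, `[X_{2k+1},X_{2k+2}] = −X_1`, `[X_2,X_{2k+1}] = −φ_k X_{2k+1}`,
`[X_2,X_{2k+2}] = (1+φ_k) X_{2k+2}` for `1 ≤ k ≤ p−1`. -/
def mu (p : ℕ) (φ : ℕ → ℂ) : Bil p :=
  elem p 1 2 (-(X p 1)) +
    ∑ k ∈ Finset.Icc 1 (p-1),
      (elem p (2*k+1) (2*k+2) (-(X p 1)) + elem p 2 (2*k+1) (-(φ k) • X p (2*k+1))
        + elem p 2 (2*k+2) ((1 + φ k) • X p (2*k+2)))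

/-- `φ` avoids the set `Ω₁`. -/
def AvoidsOmega1 (p : ℕ) (φ : ℕ → ℂ) : Prop :=
  ∀ i j : ℕ, 1 ≤ i → i ≤ p - 1 → 1 ≤ j → j ≤ p - 1 →
    1 + φ i + φ j ≠ 0 ∧ 2 + φ i + φ j ≠ 0 ∧ (i ≠ j → φ i ≠ φ j) ∧
      φ i ≠ 0 ∧ φ i ≠ -1 ∧ 2 * φ i + 1 ≠ 0

/-- `φ` avoids the set `Ω = Ω₁ ∪ Ω₂`. -/
def AvoidsOmega (p : ℕ) (φ : ℕ → ℂ) : Prop :=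
  AvoidsOmega1 p φ ∧
    ∀ i j : ℕ, 1 ≤ i → i ≤ p - 1 → 1 ≤ j → j ≤ p - 1 →
      (i ≠ j → 1 + φ i - φ j ≠ 0) ∧ φ i + φ j ≠ 0 ∧ 2 + φ i ≠ 0 ∧ 1 - φ i ≠ 0 ∧
        1 + 2*φ i - φ j ≠ 0 ∧ 1 + 2*φ i + φ j ≠ 0 ∧ 2*φ i - φ j ≠ 0 ∧ 2 + 2*φ i + φ j ≠ 0

/-- The space of derivations of a bilinear bracket `B` on `ℂ^{2p}`. -/
def derSub (p : ℕ) (B : Bil p) : Submodule ℂ (V p →ₗ[ℂ] V p) where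
  carrier := {D | ∀ x y, D (B x y) = B (D x) y + B x (D y)}
  add_mem' := by
    intro D E hD hE x y
    simp only [LinearMap.add_apply, hD x y, hE x y, map_add, LinearMap.add_apply]
    abel
  zero_mem' := by intro x y; simp
  smul_mem' := by
    intro c D hD x y
    simp only [LinearMap.smul_apply, hD x y, map_smul, LinearMap.map_smul₂,
      LinearMap.smul_apply, smul_add]

/-- The grading subspaces: `g_0 = ℂ X_2`, `g_1 = ⟨X_3,…,X_{2p}⟩`, `g_2 = ℂ X_1`,
and `g_m = 0` otherwise. -/
def gr (p : ℕ) : ℤ → Submodule ℂ (V p) := fun m =>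
  if m = 0 then Submodule.span ℂ {X p 2}
  else if m = 1 then Submodule.span ℂ {v | ∃ j, 3 ≤ j ∧ j ≤ 2*p ∧ v = X p j}
  else if m = 2 then Submodule.span ℂ {X p 1}
  else ⊥

/-- The space of 2-cocycles of `F_φ` with coefficients in the adjoint module
(2-cochains are alternating bilinear maps). -/
def Z2 (p : ℕ) (φ : ℕ → ℂ) : Submodule ℂ (Bil p) where
  carrier := {ψ | (∀ x, ψ x x = 0) ∧
    ∀ x y z, mu p φ x (ψ y z) - mu p φ y (ψ x z) + mu p φ z (ψ x y)
      - ψ (mu p φ x y) z + ψ (mu p φ x z) y - ψ (mu p φ y z) x = 0}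
  add_mem' := by
    rintro ψ₁ ψ₂ ⟨h₁a, h₁c⟩ ⟨h₂a, h₂c⟩
    constructor
    · intro x; simp [h₁a x, h₂a x]
    · intro x y z
      have e₁ := h₁c x y z
      have e₂ := h₂c x y z
      simp only [LinearMap.add_apply, map_add]
      rw [← sub_eq_zero] at *
      simp only [sub_zero] at *
      linear_combination (norm := module) e₁ + e₂
  zero_mem' := by
    constructor
    · intro x; simp
    · intro x y z; simp
  smul_mem' := by
    rintro c ψ ⟨ha, hc⟩
    constructor
    · intro x; simp [ha x]
    · intro x y z
      have e := hc x y z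
      simp only [LinearMap.smul_apply, map_smul]
      linear_combination (norm := module) c • e

/-- The space of 2-coboundaries of `F_φ` with coefficients in the adjoint module. -/
def B2 (p : ℕ) (φ : ℕ → ℂ) : Submodule ℂ (Bil p) where
  carrier := {ψ | ∃ f : V p →ₗ[ℂ] V p,
    ∀ x y, ψ x y = mu p φ x (f y) - mu p φ y (f x) - f (mu p φ x y)}
  add_mem' := by
    rintro ψ₁ ψ₂ ⟨f₁, h₁⟩ ⟨f₂, h₂⟩
    refine ⟨f₁ + f₂, fun x y => ?_⟩
    simp only [LinearMap.add_apply, h₁ x y, h₂ x y, map_add]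
    abel
  zero_mem' := ⟨0, by intro x y; simp⟩
  smul_mem' := by
    rintro c ψ ⟨f, h⟩
    refine ⟨c • f, fun x y => ?_⟩
    simp only [LinearMap.smul_apply, h x y, map_smul, smul_sub]

/-- The 2-cochains of degree `k` with respect to the grading `gr`. -/
def degSub (p : ℕ) (k : ℤ) : Submodule ℂ (Bil p) where
  carrier := {ψ | ∀ (a b : ℤ), ∀ x ∈ gr p a, ∀ y ∈ gr p b, ψ x y ∈ gr p (a + b + k)}
  add_mem' := by
    intro ψ₁ ψ₂ h₁ h₂ a b x hx y hy
    simpa using Submodule.add_mem _ (h₁ a b x hx y hy) (h₂ a b x hx y hy)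
  zero_mem' := by intro a b x hx y hy; simp
  smul_mem' := by
    intro c ψ h a b x hx y hy
    simpa using Submodule.smul_mem _ c (h a b x hx y hy)

attribute [local instance 100] LieRing.ofAssociativeRing

/-- The derivations of `F_φ` as a Lie subalgebra of `End(ℂ^{2p})`. -/
def derLie (p : ℕ) (φ : ℕ → ℂ) : LieSubalgebra ℂ (Module.End ℂ (V p)) :=
  { derSub p (mu p φ) with
    lie_mem' := by
      intro D E hD hE
      have hD' : ∀ x y, D (mu p φ x y) = mu p φ (D x) y + mu p φ x (D y) := hD
      have hE' : ∀ x y, E (mu p φ x y) = mu p φ (E x) y + mu p φ x (E y) := hE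
      intro x y
      simp only [Ring.lie_def, LinearMap.sub_apply, Module.End.mul_apply]
      rw [hE' x y, hD' x y, map_add, map_add, hD' (E x) y, hD' x (E y),
        hE' (D x) y, hE' x (D y)]
      simp only [map_sub, LinearMap.sub_apply]
      abel }

/-- The derivation `f_i` of `F_φ` : `f_i(X_{2i+1}) = X_{2i+1}`, `f_i(X_{2i+2}) = −X_{2i+2}`. -/
def fDer (p i : ℕ) : V p →ₗ[ℂ] V p :=
  (coordL p (2*i+1)).smulRight (X p (2*i+1)) - (coordL p (2*i+2)).smulRight (X p (2*i+2))

/-- The 2-cocycle `ψ_k = ψ^{2k+1}_{2,2k+1}` :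
`(X_2,X_{2k+1}) ↦ X_{2k+1}`, `(X_2,X_{2k+2}) ↦ −X_{2k+2}`. -/
def psiK (p k : ℕ) : Bil p :=
  elem p 2 (2*k+1) (X p (2*k+1)) - elem p 2 (2*k+2) (X p (2*k+2))

/-- The 2-cocycle `ψ^2_{12}` spanning `Z²_{−2}`. -/
def psiM2 (p : ℕ) (φ : ℕ → ℂ) : Bil p :=
  elem p 1 2 (X p 2) +
    ∑ k ∈ Finset.Icc 1 (p-1),
      (elem p (2*k+1) (2*k+2) (X p 2) + elem p 1 (2*k+1) (-(φ k) • X p (2*k+1))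
        + elem p 1 (2*k+2) ((1 + φ k) • X p (2*k+2)))

/-- The 2-cocycle `ψ^1_{2,j}` : `(X_2,X_j) ↦ X_1`. -/
def psiTop (p j : ℕ) : Bil p := elem p 2 j (X p 1)


/-! ### Plain-function versions of the relevant spaces.
We realise spaces of (multi)linear maps as submodules of plain function spaces,
the (bi)linearity being part of the defining conditions. -/

/-- `ψ : ℂ^{2p} × ℂ^{2p} → ℂ^{2p}` is bilinear. -/
def IsBil (p : ℕ) (ψ : V p → V p → V p) : Prop :=
  (∀ x x' y, ψ (x + x') y = ψ x y + ψ x' y) ∧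
  (∀ (c : ℂ) (x y), ψ (c • x) y = c • ψ x y) ∧
  (∀ x y y', ψ x (y + y') = ψ x y + ψ x y') ∧
  (∀ (c : ℂ) (x y), ψ x (c • y) = c • ψ x y)

/-- The space of derivations of a bilinear bracket `B` on `ℂ^{2p}`, realised inside
the space of all maps `ℂ^{2p} → ℂ^{2p}` (linearity is part of the conditions). -/
def derF (p : ℕ) (B : Bil p) : Submodule ℂ (V p → V p) where
  carrier := {D | (∀ x y, D (x + y) = D x + D y) ∧ (∀ (c : ℂ) (x), D (c • x) = c • D x) ∧
    ∀ x y, D (B x y) = B (D x) y + B x (D y)}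
  add_mem' := by
    rintro D E ⟨hDa, hDs, hDd⟩ ⟨hEa, hEs, hEd⟩
    refine ⟨fun x y => ?_, fun c x => ?_, fun x y => ?_⟩
    · simp only [Pi.add_apply, hDa, hEa]; abel
    · simp only [Pi.add_apply, hDs, hEs, smul_add]
    · simp only [Pi.add_apply, hDd x y, hEd x y, map_add, LinearMap.add_apply]; abel
  zero_mem' := by
    refine ⟨fun x y => ?_, fun c x => ?_, fun x y => ?_⟩ <;> simp
  smul_mem' := by
    rintro c D ⟨hDa, hDs, hDd⟩
    refine ⟨fun x y => ?_, fun c' x => ?_, fun x y => ?_⟩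
    · simp only [Pi.smul_apply, hDa, smul_add]
    · simp only [Pi.smul_apply, hDs, smul_comm c c']
    · simp only [Pi.smul_apply, hDd x y, map_smul, LinearMap.smul_apply, smul_add]

/-- The space of inner derivations `ad(v) = B(v,·)` of a bilinear bracket `B`. -/
def innerF (p : ℕ) (B : Bil p) : Submodule ℂ (V p → V p) where
  carrier := {D | ∃ v, D = fun y => B v y}
  add_mem' := by
    rintro D E ⟨v, rfl⟩ ⟨w, rfl⟩
    exact ⟨v + w, by funext y; simp [map_add]⟩
  zero_mem' := ⟨0, by funext y; simp⟩
  smul_mem' := by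
    rintro c D ⟨v, rfl⟩
    exact ⟨c • v, by funext y; simp [map_smul]⟩

/-- The space of 2-cocycles of `F_φ` with coefficients in the adjoint module;
2-cochains are alternating bilinear maps `ℂ^{2p} × ℂ^{2p} → ℂ^{2p}`. -/
def Z2F (p : ℕ) (φ : ℕ → ℂ) : Submodule ℂ (V p → V p → V p) where
  carrier := {ψ | IsBil p ψ ∧ (∀ x, ψ x x = 0) ∧
    ∀ x y z, mu p φ x (ψ y z) - mu p φ y (ψ x z) + mu p φ z (ψ x y)
      - ψ (mu p φ x y) z + ψ (mu p φ x z) y - ψ (mu p φ y z) x = 0}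
  add_mem' := by
    rintro ψ₁ ψ₂ ⟨⟨hb₁, hb₂, hb₃, hb₄⟩, ha, hc⟩ ⟨⟨hb₁', hb₂', hb₃', hb₄'⟩, ha', hc'⟩
    refine ⟨⟨fun x x' y => ?_, fun c x y => ?_, fun x y y' => ?_, fun c x y => ?_⟩,
      fun x => ?_, fun x y z => ?_⟩
    · simp only [Pi.add_apply, hb₁, hb₁']; abel
    · simp only [Pi.add_apply, hb₂, hb₂', smul_add]
    · simp only [Pi.add_apply, hb₃, hb₃']; abel
    · simp only [Pi.add_apply, hb₄, hb₄', smul_add]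
    · simp only [Pi.add_apply, ha x, ha' x]; abel
    · have e := hc x y z
      have e' := hc' x y z
      simp only [Pi.add_apply, map_add]
      linear_combination (norm := module) e + e'
  zero_mem' := by
    refine ⟨⟨fun x x' y => ?_, fun c x y => ?_, fun x y y' => ?_, fun c x y => ?_⟩,
      fun x => ?_, fun x y z => ?_⟩ <;> simp
  smul_mem' := by
    rintro c ψ ⟨⟨hb₁, hb₂, hb₃, hb₄⟩, ha, hc⟩
    refine ⟨⟨fun x x' y => ?_, fun c' x y => ?_, fun x y y' => ?_, fun c' x y => ?_⟩,
      fun x => ?_, fun x y z => ?_⟩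
    · simp only [Pi.smul_apply, hb₁, smul_add]
    · simp only [Pi.smul_apply, hb₂, smul_comm c c']
    · simp only [Pi.smul_apply, hb₃, smul_add]
    · simp only [Pi.smul_apply, hb₄, smul_comm c c']
    · simp only [Pi.smul_apply, ha x, smul_zero]
    · have e := hc x y z
      simp only [Pi.smul_apply, map_smul]
      linear_combination (norm := module) c • e

/-- The space of 2-coboundaries of `F_φ` with coefficients in the adjoint module. -/
def B2F (p : ℕ) (φ : ℕ → ℂ) : Submodule ℂ (V p → V p → V p) where
  carrier := {ψ | ∃ f : V p →ₗ[ℂ] V p,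
    ∀ x y, ψ x y = mu p φ x (f y) - mu p φ y (f x) - f (mu p φ x y)}
  add_mem' := by
    rintro ψ₁ ψ₂ ⟨f₁, h₁⟩ ⟨f₂, h₂⟩
    refine ⟨f₁ + f₂, fun x y => ?_⟩
    simp only [Pi.add_apply, h₁ x y, h₂ x y, map_add, LinearMap.add_apply]
    abel
  zero_mem' := ⟨0, by intro x y; simp⟩
  smul_mem' := by
    rintro c ψ ⟨f, h⟩
    refine ⟨c • f, fun x y => ?_⟩
    simp only [Pi.smul_apply, h x y, map_smul, LinearMap.smul_apply, smul_sub]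

/-- The 2-cochains of degree `k` with respect to the grading `gr`. -/
def degF (p : ℕ) (k : ℤ) : Submodule ℂ (V p → V p → V p) where
  carrier := {ψ | ∀ (a b : ℤ), ∀ x ∈ gr p a, ∀ y ∈ gr p b, ψ x y ∈ gr p (a + b + k)}
  add_mem' := by
    intro ψ₁ ψ₂ h₁ h₂ a b x hx y hy
    simpa using Submodule.add_mem _ (h₁ a b x hx y hy) (h₂ a b x hx y hy)
  zero_mem' := by intro a b x hx y hy; simp
  smul_mem' := by
    intro c ψ h a b x hx y hy
    simpa using Submodule.smul_mem _ c (h a b x hx y hy)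

/-- A bilinear map, viewed as a plain function. -/
def toF (p : ℕ) (B : Bil p) : V p → V p → V p := fun x y => B x y

/-!
`ad X₂` is diagonal on the basis, with eigenvalue vector `weight = (1, 0, …, -φ_k, 1 + φ_k, …)`,
and `[x, y] = weight ⊙ (x₂ y - y₂ x) - symp x y • X₁`, where `symp` is the symplectic form
pairing `X_{2k+1}` with `X_{2k+2}`. Off `Ω₁` the eigenvalues are pairwise distinct. Adding an inner derivation to a
derivation `D` makes it map `X₂` into `ℂ X₂`; it then commutes with `ad X₂`, hence is diagonal,
with eigenvalues `d` satisfying `d₂ = 0` and `d_{2k+1} + d_{2k+2} = d₁`. Such a diagonal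
derivation is a multiple of `ad X₂` exactly when `d_{2k+1} + φ_k d₁ = 0` for all `k`. These
`p - 1` numbers, read off any derivation, vanish on inner derivations and are arbitrary on
diagonal ones, so they identify `H¹` with `ℂ^{p-1}`.
-/

open Finset

theorem LinearMap.exists_eq_mulLeft_of_commute {ι K : Type*} [Field K] [Fintype ι] [DecidableEq ι]
    (f : (ι → K) →ₗ[K] ι → K) {w : ι → K} (hw : Function.Injective w)
    (hf : ∀ x, f (w * x) = w * f x) : ∃ d : ι → K, f = LinearMap.mulLeft K d := by
  refine ⟨fun i => f (Pi.single i 1) i, (Pi.basisFun K ι).ext fun j => funext fun i => ?_⟩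
  rw [Pi.basisFun_apply, LinearMap.mulLeft_apply, Pi.mul_apply]
  by_cases hij : i = j
  · subst hij; simp
  · have hwj : w * Pi.single j 1 = w j • Pi.single (M := fun _ => K) j 1 := by
      funext i; by_cases h : i = j <;> simp [h]
    have key := congrFun (hf (Pi.single j 1)) i
    rw [hwj, map_smul] at key
    simp only [Pi.smul_apply, smul_eq_mul, Pi.mul_apply] at key
    have hne : w j - w i ≠ 0 := sub_ne_zero.mpr (hw.ne (Ne.symm hij))
    have : (w j - w i) * f (Pi.single j 1) i = 0 := by linear_combination key
    simp [(mul_eq_zero.mp this).resolve_left hne, hij]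

section Coordinates
variable {p : ℕ}

lemma coordL_succ (i : Fin (2 * p)) (x : V p) : coordL p (i + 1) x = x i := by
  simp [coordL, i.isLt]

lemma coordL_X {j : ℕ} (hj : 1 ≤ j) (i : ℕ) :
    coordL p j (X p i) = if j = i ∧ j ≤ 2 * p then 1 else 0 := by
  by_cases hjp : j ≤ 2 * p
  · simp [coordL, dif_pos (show j - 1 < 2 * p by omega), X, Nat.sub_add_cancel hj, hjp]
  · simp [coordL, dif_neg (show ¬ j - 1 < 2 * p by omega), hjp]

lemma coordL_X_self {j : ℕ} (hj : 1 ≤ j) (hjp : j ≤ 2 * p) : coordL p j (X p j) = 1 := by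
  simp [coordL_X hj, hjp]

lemma coordL_X_of_ne {i j : ℕ} (hj : 1 ≤ j) (h : j ≠ i) : coordL p j (X p i) = 0 := by
  simp [coordL_X hj, h]

lemma coordL_mul (j : ℕ) (x y : V p) : coordL p j (x * y) = coordL p j x * coordL p j y := by
  unfold coordL; split_ifs <;> simp

lemma X_mul (j : ℕ) (y : V p) : X p j * y = coordL p j y • X p j := by
  funext i
  by_cases h : (i : ℕ) + 1 = j
  · subst h; simp [X, coordL_succ]
  · simp [X, h]

lemma ext_coordL {x y : V p} (h : ∀ j, 1 ≤ j → j ≤ 2 * p → coordL p j x = coordL p j y) :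
    x = y := by
  funext i
  simpa only [coordL_succ] using h (i + 1) (by omega) (by omega)

lemma index_cases {j : ℕ} (hj : 1 ≤ j) (hjp : j ≤ 2 * p) :
    j = 1 ∨ j = 2 ∨ ∃ k ∈ Icc 1 (p - 1), j = 2 * k + 1 ∨ j = 2 * k + 2 :=
  if h : j ≤ 2 then by omega
  else Or.inr <| Or.inr ⟨(j - 1) / 2, by simp only [mem_Icc]; omega, by omega⟩

lemma elem_apply (a b : ℕ) (v x y : V p) :
    elem p a b v x y = (coordL p a x * coordL p b y - coordL p b x * coordL p a y) • v := by
  simp [elem, sub_smul, smul_smul]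

end Coordinates

def pairVec (p : ℕ) (a b : ℕ → ℂ) : V p :=
  ∑ k ∈ Icc 1 (p - 1), (a k • X p (2 * k + 1) + b k • X p (2 * k + 2))

section PairVec
variable {p : ℕ} (a b : ℕ → ℂ)

lemma coordL_pairVec_of_le_two {j : ℕ} (hj : 1 ≤ j) (hj2 : j ≤ 2) :
    coordL p j (pairVec p a b) = 0 := by
  simp only [pairVec, map_sum, map_add, map_smul, coordL_X hj, smul_eq_mul]
  exact Finset.sum_eq_zero fun l hl => by
    simp only [mem_Icc] at hl; split_ifs <;> first | (exfalso; omega) | ring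

lemma coordL_pairVec_odd {k : ℕ} (hk : k ∈ Icc 1 (p - 1)) :
    coordL p (2 * k + 1) (pairVec p a b) = a k := by
  simp only [pairVec, map_sum, map_add, map_smul, coordL_X (by omega : 1 ≤ 2 * k + 1),
    smul_eq_mul]
  rw [Finset.sum_eq_single k (fun l _ hlk => by split_ifs <;> first | (exfalso; omega) | ring)
    (absurd hk)]
  simp only [mem_Icc] at hk
  split_ifs <;> first | (exfalso; omega) | ring

lemma coordL_pairVec_even {k : ℕ} (hk : k ∈ Icc 1 (p - 1)) :
    coordL p (2 * k + 2) (pairVec p a b) = b k := by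
  simp only [pairVec, map_sum, map_add, map_smul, coordL_X (by omega : 1 ≤ 2 * k + 2),
    smul_eq_mul]
  rw [Finset.sum_eq_single k (fun l _ hlk => by split_ifs <;> first | (exfalso; omega) | ring)
    (absurd hk)]
  simp only [mem_Icc] at hk
  split_ifs <;> first | (exfalso; omega) | ring

end PairVec

def weight (p : ℕ) (φ : ℕ → ℂ) : V p := X p 1 + pairVec p (fun k => -φ k) (fun k => 1 + φ k)

def symp (p : ℕ) : V p →ₗ[ℂ] V p →ₗ[ℂ] ℂ :=
  ∑ k ∈ Icc 1 (p - 1), ((coordL p (2 * k + 1)).smulRight (coordL p (2 * k + 2))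
    - (coordL p (2 * k + 2)).smulRight (coordL p (2 * k + 1)))

section Weight
variable {p : ℕ} (φ : ℕ → ℂ)

lemma coordL_one_weight (hp : 1 ≤ p) : coordL p 1 (weight p φ) = 1 := by
  simp [weight, coordL_X_self le_rfl (by omega : 1 ≤ 2 * p), coordL_pairVec_of_le_two]

lemma coordL_two_weight : coordL p 2 (weight p φ) = 0 := by
  simp [weight, coordL_X_of_ne (by omega : 1 ≤ 2) (by omega : 2 ≠ 1), coordL_pairVec_of_le_two]

lemma coordL_odd_weight {k : ℕ} (hk : k ∈ Icc 1 (p - 1)) :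
    coordL p (2 * k + 1) (weight p φ) = -φ k := by
  have := (mem_Icc.mp hk).1
  simp [weight, coordL_X_of_ne (by omega : 1 ≤ 2 * k + 1) (by omega : 2 * k + 1 ≠ 1),
    coordL_pairVec_odd _ _ hk]

lemma coordL_even_weight {k : ℕ} (hk : k ∈ Icc 1 (p - 1)) :
    coordL p (2 * k + 2) (weight p φ) = 1 + φ k := by
  have := (mem_Icc.mp hk).1
  simp [weight, coordL_X_of_ne (by omega : 1 ≤ 2 * k + 2) (by omega : 2 * k + 2 ≠ 1),
    coordL_pairVec_even _ _ hk]

lemma coordL_odd_add_even_weight {k : ℕ} (hk : k ∈ Icc 1 (p - 1)) :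
    coordL p (2 * k + 1) (weight p φ) + coordL p (2 * k + 2) (weight p φ)
      = coordL p 1 (weight p φ) := by
  rw [coordL_odd_weight φ hk, coordL_even_weight φ hk,
    coordL_one_weight φ (by simp only [mem_Icc] at hk; omega)]
  ring

lemma weight_mul_X_one (hp : 1 ≤ p) : weight p φ * X p 1 = X p 1 := by
  rw [mul_comm, X_mul, coordL_one_weight φ hp, one_smul]

lemma weight_injective (hΩ : AvoidsOmega1 p φ) : Function.Injective (weight p φ) := by
  intro i i' h
  replace h : coordL p (i + 1) (weight p φ) = coordL p (i' + 1) (weight p φ) := by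
    rwa [coordL_succ, coordL_succ]
  refine Fin.ext (Nat.succ_injective ?_)
  rcases index_cases (p := p) (j := i + 1) (by omega) (by omega) with
    h1 | h1 | ⟨k, hk, h1 | h1⟩ <;>
  rcases index_cases (p := p) (j := i' + 1) (by omega) (by omega) with
    h2 | h2 | ⟨l, hl, h2 | h2⟩ <;>
  rw [h1, h2] at h <;>
  grind [AvoidsOmega1, coordL_one_weight, coordL_two_weight, coordL_odd_weight, coordL_even_weight]

/-- Division by the zero weight of `X₂` returns `0`, which is what removes the `X₂`-component. -/
lemma weight_mul_div (hΩ : AvoidsOmega1 p φ) (y : V p) :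
    weight p φ * (y / weight p φ) = y - coordL p 2 y • X p 2 := by
  funext i
  by_cases hi : (i : ℕ) + 1 = 2
  · have h0 : weight p φ i = 0 := by rw [← coordL_succ i (weight p φ), hi, coordL_two_weight]
    have hy : coordL p 2 y = y i := by rw [← coordL_succ i y, hi]
    simp [h0, X, hi, hy]
  · have h1 : weight p φ ⟨1, by omega⟩ = 0 := by
      rw [← coordL_succ _ (weight p φ)]; exact coordL_two_weight φ
    have h0 : weight p φ i ≠ 0 := fun h0 =>
      hi (by simpa using congrArg Fin.val (weight_injective φ hΩ (h0.trans h1.symm)))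
    simp [X, hi, mul_div_cancel₀ _ h0]

end Weight

section Symp
variable {p : ℕ}

lemma symp_apply (x y : V p) : symp p x y = ∑ k ∈ Icc 1 (p - 1),
    (coordL p (2 * k + 1) x * coordL p (2 * k + 2) y
      - coordL p (2 * k + 2) x * coordL p (2 * k + 1) y) := by
  simp [symp]

lemma symp_comm (x y : V p) : symp p y x = -symp p x y := by
  simp only [symp_apply, ← Finset.sum_neg_distrib]
  exact Finset.sum_congr rfl fun k _ => by ring

lemma symp_X_left_of_le_two {j : ℕ} (hj : j ≤ 2) (y : V p) : symp p (X p j) y = 0 := by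
  refine (symp_apply _ _).trans (Finset.sum_eq_zero fun k hk => ?_)
  simp only [mem_Icc] at hk
  rw [coordL_X_of_ne (by omega) (by omega : 2 * k + 1 ≠ j),
    coordL_X_of_ne (by omega) (by omega : 2 * k + 2 ≠ j)]
  ring

lemma symp_X_right_of_le_two {j : ℕ} (hj : j ≤ 2) (x : V p) : symp p x (X p j) = 0 := by
  rw [symp_comm, symp_X_left_of_le_two hj, neg_zero]

lemma symp_mul_add {d : V p}
    (hd : ∀ k ∈ Icc 1 (p - 1), coordL p (2 * k + 1) d + coordL p (2 * k + 2) d = coordL p 1 d)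
    (x y : V p) : symp p (d * x) y + symp p x (d * y) = coordL p 1 d * symp p x y := by
  simp only [symp_apply, coordL_mul, ← Finset.sum_add_distrib, Finset.mul_sum]
  refine Finset.sum_congr rfl fun k hk => ?_
  rw [← hd k hk]
  ring

end Symp

section Bracket
variable {p : ℕ} (φ : ℕ → ℂ)

lemma mu_eq (x y : V p) : mu p φ x y =
    weight p φ * (coordL p 2 x • y - coordL p 2 y • x) - symp p x y • X p 1 := by
  simp only [mu, weight, pairVec, symp_apply, LinearMap.add_apply, LinearMap.sum_apply,
    elem_apply, add_mul, Finset.sum_mul, smul_mul_assoc, X_mul, map_sub, map_smul, smul_eq_mul,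
    Finset.sum_smul]
  rw [add_sub_assoc, ← Finset.sum_sub_distrib]
  congr 1
  · module
  · refine Finset.sum_congr rfl fun k _ => ?_
    module

lemma mu_comm (x y : V p) : mu p φ y x = -mu p φ x y := by
  rw [mu_eq, mu_eq, symp_comm]
  simp only [mul_sub, mul_smul_comm]
  module

lemma coordL_two_mu (x y : V p) : coordL p 2 (mu p φ x y) = 0 := by
  simp [mu_eq, coordL_mul, coordL_two_weight, coordL_X_of_ne (by omega : 1 ≤ 2) (by omega : 2 ≠ 1)]

lemma mu_X_two_left (hp : 1 ≤ p) (y : V p) : mu p φ (X p 2) y = weight p φ * y := by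
  rw [mu_eq, symp_X_left_of_le_two le_rfl, coordL_X_self (by omega) (by omega), mul_sub,
    mul_smul_comm, mul_smul_comm, mul_comm _ (X p 2), X_mul, coordL_two_weight]
  simp

lemma mu_X_odd_X_even {k : ℕ} (hk : k ∈ Icc 1 (p - 1)) :
    mu p φ (X p (2 * k + 1)) (X p (2 * k + 2)) = -X p 1 := by
  have hk' := mem_Icc.mp hk
  have hsymp : symp p (X p (2 * k + 1)) (X p (2 * k + 2)) = 1 := by
    rw [symp_apply, Finset.sum_eq_single k _ (absurd hk)]
    · simp [coordL_X_self (by omega : 1 ≤ 2 * k + 1) (by omega : 2 * k + 1 ≤ 2 * p),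
        coordL_X_self (by omega : 1 ≤ 2 * k + 2) (by omega : 2 * k + 2 ≤ 2 * p),
        coordL_X_of_ne (by omega : 1 ≤ 2 * k + 1) (by omega : 2 * k + 1 ≠ 2 * k + 2)]
    · intro l _ hlk
      rw [coordL_X_of_ne (by omega) (by omega : 2 * l + 1 ≠ 2 * k + 1),
        coordL_X_of_ne (by omega) (by omega : 2 * l + 1 ≠ 2 * k + 2)]
      ring
  rw [mu_eq, hsymp, coordL_X_of_ne (by omega) (by omega : 2 ≠ 2 * k + 1),
    coordL_X_of_ne (by omega) (by omega : 2 ≠ 2 * k + 2)]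
  simp

lemma mu_jacobi (hp : 1 ≤ p) (u x y : V p) :
    mu p φ u (mu p φ x y) = mu p φ (mu p φ u x) y + mu p φ x (mu p φ u y) := by
  have hs := fun a b => symp_mul_add (p := p) (fun k hk => coordL_odd_add_even_weight φ hk) a b
  simp only [coordL_one_weight φ hp, one_mul] at hs
  rw [mu_eq φ u, mu_eq φ (mu p φ u x), mu_eq φ x (mu p φ u y), coordL_two_mu, coordL_two_mu,
    coordL_two_mu]
  simp only [mu_eq φ x y, mu_eq φ u x, mu_eq φ u y, map_sub, map_smul, smul_eq_mul, mul_sub,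
    mul_smul_comm, weight_mul_X_one φ hp, LinearMap.sub_apply, LinearMap.smul_apply,
    symp_X_left_of_le_two (by omega : 1 ≤ 2), symp_X_right_of_le_two (by omega : 1 ≤ 2)]
  -- the `X₁`-components cancel because `ad X₂` is a derivation of `symp` and `symp` is alternating
  linear_combination (norm := module) (coordL p 2 u * hs x y - coordL p 2 x * hs u y
    + coordL p 2 y * hs u x - coordL p 2 y * symp_comm (weight p φ * u) x) • X p 1

end Bracket

section Derivations
variable {p : ℕ} (φ : ℕ → ℂ)

lemma ad_mem_derF (hp : 1 ≤ p) (v : V p) : (fun y => mu p φ v y) ∈ derF p (mu p φ) :=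
  ⟨fun x y => map_add _ x y, fun c x => map_smul _ c x, mu_jacobi φ hp v⟩

lemma mul_mem_derF {d : V p} (h2 : coordL p 2 d = 0)
    (hd : ∀ k ∈ Icc 1 (p - 1), coordL p (2 * k + 1) d + coordL p (2 * k + 2) d = coordL p 1 d) :
    (fun x => d * x) ∈ derF p (mu p φ) := by
  refine ⟨fun x y => mul_add d x y, fun c x => mul_smul_comm c d x, fun x y => ?_⟩
  have hs := symp_mul_add hd x y
  simp only [mu_eq, coordL_mul, h2, zero_mul, mul_sub, mul_smul_comm,
    mul_left_comm d (weight p φ)]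
  rw [mul_comm d (X p 1), X_mul]
  linear_combination (norm := module) hs • X p 1

lemma exists_eq_mul_of_mem_derF (hΩ : AvoidsOmega1 p φ) (hp : 1 ≤ p) {D : V p → V p}
    (hD : D ∈ derF p (mu p φ)) {c : ℂ} (hD2 : D (X p 2) = c • X p 2) :
    ∃ d : V p, coordL p 2 d = 0 ∧ ∀ x, D x = d * x := by
  obtain ⟨hadd, hsmul, hleib⟩ := hD
  have hcomm : ∀ x, D (weight p φ * x) = c • (weight p φ * x) + weight p φ * D x := fun x => by
    rw [← mu_X_two_left φ hp, hleib, hD2, map_smul, LinearMap.smul_apply, mu_X_two_left φ hp,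
      mu_X_two_left φ hp]
  have hc : c = 0 := by
    have := congrArg (coordL p 1) (hcomm (X p 1))
    rw [weight_mul_X_one φ hp, map_add, map_smul, coordL_mul, coordL_one_weight φ hp,
      coordL_X_self le_rfl (by omega)] at this
    linear_combination -this
  subst hc
  obtain ⟨d, hd⟩ := LinearMap.exists_eq_mulLeft_of_commute (IsLinearMap.mk' D ⟨hadd, hsmul⟩)
    (weight_injective φ hΩ) (fun x => by simpa using hcomm x)
  have hd' : ∀ x, D x = d * x := fun x => LinearMap.congr_fun hd x
  refine ⟨d, ?_, hd'⟩
  have := congrArg (coordL p 2) (hd' (X p 2))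
  rwa [hD2, zero_smul, map_zero, coordL_mul, coordL_X_self (by omega) (by omega), mul_one,
    eq_comm] at this

end Derivations

/-- For an inner derivation `ad v`, the `X_{2k+1}`-coefficient of `[v, X_{2k+1}]` is `-φ_k`
times the `X₁`-coefficient of `[v, X₁]`; `outerCoords` measures the failure of this relation. -/
def outerCoords (p : ℕ) (φ : ℕ → ℂ) : (V p → V p) →ₗ[ℂ] (Icc 1 (p - 1) → ℂ) where
  toFun D k := coordL p (2 * k + 1) (D (X p (2 * k + 1))) + φ k * coordL p 1 (D (X p 1))
  map_add' D E := by funext k; simp only [Pi.add_apply, map_add]; ring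
  map_smul' c D := by
    funext k; simp only [Pi.smul_apply, map_smul, smul_eq_mul, RingHom.id_apply]; ring

section OuterCoords
variable {p : ℕ} (φ : ℕ → ℂ)

lemma outerCoords_mul (d : V p) (k : Icc 1 (p - 1)) :
    outerCoords p φ (fun x => d * x) k = coordL p (2 * k + 1) d + φ k * coordL p 1 d := by
  have hk := mem_Icc.mp k.2
  simp [outerCoords, coordL_mul,
    coordL_X_self (p := p) (by omega : 1 ≤ 2 * (k : ℕ) + 1) (by omega),
    coordL_X_self le_rfl (by omega : 1 ≤ 2 * p)]

lemma outerCoords_ad (v : V p) : outerCoords p φ (fun y => mu p φ v y) = 0 := by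
  funext k
  have hk := mem_Icc.mp k.2
  simp [outerCoords, mu_eq, coordL_mul,
    coordL_X_self (p := p) (by omega : 1 ≤ 2 * (k : ℕ) + 1) (by omega),
    coordL_X_self le_rfl (by omega : 1 ≤ 2 * p),
    coordL_X_of_ne (by omega : 1 ≤ 2) (by omega : 2 ≠ 1),
    coordL_X_of_ne (by omega : 1 ≤ 2) (by omega : 2 ≠ 2 * (k : ℕ) + 1),
    coordL_X_of_ne (by omega : 1 ≤ 2 * (k : ℕ) + 1) (by omega : 2 * (k : ℕ) + 1 ≠ 1),
    coordL_odd_weight φ k.2, coordL_one_weight φ (by omega : 1 ≤ p), symp_X_right_of_le_two]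
  ring

lemma eq_smul_weight_of_mul_mem_derF {d : V p} (hD : (fun x => d * x) ∈ derF p (mu p φ))
    (h2 : coordL p 2 d = 0) (hT : outerCoords p φ (fun x => d * x) = 0) :
    d = coordL p 1 d • weight p φ := by
  have hpair : ∀ k ∈ Icc 1 (p - 1),
      coordL p (2 * k + 1) d + coordL p (2 * k + 2) d = coordL p 1 d := fun k hk => by
    have := congrArg (coordL p 1) (hD.2.2 (X p (2 * k + 1)) (X p (2 * k + 2)))
    have hk' := mem_Icc.mp hk
    simp only [mu_X_odd_X_even φ hk, mul_comm d, X_mul, map_smul, LinearMap.smul_apply, neg_mul,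
      map_neg, map_add, smul_eq_mul, coordL_X_self le_rfl (by omega : 1 ≤ 2 * p)] at this
    linear_combination this
  have hodd : ∀ k ∈ Icc 1 (p - 1), coordL p (2 * k + 1) d = -φ k * coordL p 1 d := fun k hk => by
    have := congrFun hT ⟨k, hk⟩
    rw [outerCoords_mul, Pi.zero_apply] at this
    linear_combination this
  refine ext_coordL fun j hj hjp => ?_
  rcases index_cases hj hjp with rfl | rfl | ⟨k, hk, rfl | rfl⟩
  · simp [coordL_one_weight φ (by omega : 1 ≤ p)]
  · simp [coordL_two_weight, h2]
  · simp [coordL_odd_weight φ hk, hodd k hk]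
    ring
  · simp [coordL_even_weight φ hk]
    linear_combination hpair k hk - hodd k hk

lemma mem_innerF_of_outerCoords_eq_zero (hΩ : AvoidsOmega1 p φ) (hp : 1 ≤ p) {D : V p → V p}
    (hD : D ∈ derF p (mu p φ)) (hT : outerCoords p φ D = 0) : D ∈ innerF p (mu p φ) := by
  set u := D (X p 2) / weight p φ
  set D' := D + fun y => mu p φ u y
  have hD' : D' ∈ derF p (mu p φ) := add_mem hD (ad_mem_derF φ hp u)
  have hD'2 : D' (X p 2) = coordL p 2 (D (X p 2)) • X p 2 := by
    simp only [D', Pi.add_apply]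
    rw [mu_comm, mu_X_two_left φ hp, weight_mul_div φ hΩ]
    abel
  obtain ⟨d, hd2, hd⟩ := exists_eq_mul_of_mem_derF φ hΩ hp hD' hD'2
  have hdD' : (fun x => d * x) = D' := funext fun x => (hd x).symm
  have hdw := eq_smul_weight_of_mul_mem_derF φ (hdD' ▸ hD') hd2
    (by rw [hdD', map_add, hT, outerCoords_ad, add_zero])
  refine ⟨coordL p 1 d • X p 2 - u, funext fun y => ?_⟩
  have := hd y
  simp only [D', Pi.add_apply] at this
  rw [map_sub, LinearMap.sub_apply, map_smul, LinearMap.smul_apply, mu_X_two_left φ hp,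
    ← smul_mul_assoc, ← hdw, ← this]
  abel

lemma exists_mem_derF_outerCoords_eq (c : Icc 1 (p - 1) → ℂ) :
    ∃ D ∈ derF p (mu p φ), outerCoords p φ D = c := by
  let c' : ℕ → ℂ := fun k => if hk : k ∈ Icc 1 (p - 1) then c ⟨k, hk⟩ else 0
  let d := pairVec p c' (-c')
  have hd1 : coordL p 1 d = 0 := coordL_pairVec_of_le_two _ _ le_rfl (by omega)
  refine ⟨fun x => d * x, mul_mem_derF φ (coordL_pairVec_of_le_two _ _ (by omega) le_rfl)
    fun k hk => ?_, funext fun k => ?_⟩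
  · rw [coordL_pairVec_odd _ _ hk, coordL_pairVec_even _ _ hk, hd1, Pi.neg_apply, add_neg_cancel]
  · rw [outerCoords_mul, coordL_pairVec_odd _ _ k.2, hd1, mul_zero, add_zero]
    exact dif_pos k.2

end OuterCoords

/-- if `φ` avoids `Ω₁` then `dim H¹(F_φ, F_φ) = p − 1`, i.e. the
quotient of the space of derivations of `F_φ` by the subspace of inner
derivations has dimension `p − 1`. -/
theorem stmt5 (p : ℕ) (hp : 2 ≤ p) (φ : ℕ → ℂ) (hΩ : AvoidsOmega1 p φ) :
    Module.finrank ℂ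
      (↥(derF p (mu p φ)) ⧸
        Submodule.comap (derF p (mu p φ)).subtype (innerF p (mu p φ)))
      = p - 1 := by
  set T := (outerCoords p φ).domRestrict (derF p (mu p φ))
  have hker : LinearMap.ker T = (innerF p (mu p φ)).comap (derF p (mu p φ)).subtype := by
    ext ⟨D, hD⟩
    simp only [LinearMap.mem_ker, LinearMap.domRestrict_apply, Submodule.mem_comap,
      Submodule.subtype_apply, T]
    refine ⟨mem_innerF_of_outerCoords_eq_zero φ hΩ (by omega) hD, ?_⟩
    rintro ⟨v, rfl⟩
    exact outerCoords_ad φ v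
  have hsurj : Function.Surjective T := fun c =>
    let ⟨D, hD, hDc⟩ := exists_mem_derF_outerCoords_eq φ c
    ⟨⟨D, hD⟩, hDc⟩
  rw [← hker, (T.quotKerEquivOfSurjective hsurj).finrank_eq, Module.finrank_fintype_fun_eq_card,
    Fintype.card_coe, Nat.card_Icc]
  omega
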